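/- arXiv:2601.10501 — 2 statements merged into one kernel-verified Lean document; each statement's English description precedes it below -/
import Mathlib

section
/- Consider maximizing ∑_{i=1}^n log p_i over p_1,…,p_n > 0 subject to ∑_i p_i = 1 and ∑_i p_i g_i = 0, where g_1,…,g_n are fixed reals such that 0 is in the interior of the convex hull of {g_1,…,g_n}. The maximizer is p_i = n^{-1} / (1 + λ g_i), where λ is the unique solution in the interval (−1/max_i g_i, −1/min_i g_i) of ∑_{i=1}^n g_i/(1 + λ g_i) = 0. -/
/-!
On the set of multipliers `lam` with all `1 + lam * g i > 0`, which is exactly the interval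
`(-1 / max g, -1 / min g)`, the score `lam ↦ ∑ g i / (1 + lam * g i)` is continuous and strictly
decreasing. It is positive somewhere because the term of a maximal `g i` blows up at the left end,
and, by the symmetry `(g, lam) ↦ (-g, -lam)`, negative somewhere; so it has exactly one zero.
Optimality is `log x ≤ x - 1` applied to `q i / p i`, whose sum is `n` by the two constraints.
-/

open Finset

namespace EmpiricalLikelihood

variable {ι : Type*}

def multiplierDomain (g : ι → ℝ) : Set ℝ := {lam | ∀ i, 0 < 1 + lam * g i}

lemma one_add_mul_pos_of_le_of_le {a b c x : ℝ} (hac : a ≤ c) (hcb : c ≤ b)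
    (ha : 0 < 1 + a * x) (hb : 0 < 1 + b * x) : 0 < 1 + c * x := by
  rcases le_total 0 x with hx | hx
  · nlinarith [mul_le_mul_of_nonneg_right hac hx]
  · nlinarith [mul_le_mul_of_nonpos_right hcb hx]

lemma ordConnected_multiplierDomain (g : ι → ℝ) : (multiplierDomain g).OrdConnected :=
  ⟨fun _ ha _ hb _ hc i => one_add_mul_pos_of_le_of_le hc.1 hc.2 (ha i) (hb i)⟩

lemma neg_mem_multiplierDomain_neg {g : ι → ℝ} {lam : ℝ} :
    -lam ∈ multiplierDomain (-g) ↔ lam ∈ multiplierDomain g := by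
  simp only [multiplierDomain, Set.mem_ofPred_eq, Pi.neg_apply, neg_mul_neg]

variable [Fintype ι]

noncomputable def score (g : ι → ℝ) (lam : ℝ) : ℝ := ∑ i, g i / (1 + lam * g i)

lemma score_neg (g : ι → ℝ) (lam : ℝ) : score (-g) (-lam) = -score g lam := by
  simp only [score, Pi.neg_apply, neg_mul_neg, neg_div, sum_neg_distrib]

lemma continuousOn_score (g : ι → ℝ) : ContinuousOn (score g) (multiplierDomain g) :=
  continuousOn_finsetSum _ fun i _ =>
    continuousOn_const.div (by fun_prop) fun _ hlam => (hlam i).ne'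

lemma div_one_add_mul_le_of_le {a b x : ℝ} (hab : a ≤ b) (ha : 0 < 1 + a * x)
    (hb : 0 < 1 + b * x) : x / (1 + b * x) ≤ x / (1 + a * x) := by
  rw [div_le_div_iff₀ hb ha]; nlinarith [sq_nonneg x]

lemma div_one_add_mul_lt_of_lt {a b x : ℝ} (hab : a < b) (hx : x ≠ 0) (ha : 0 < 1 + a * x)
    (hb : 0 < 1 + b * x) : x / (1 + b * x) < x / (1 + a * x) := by
  rw [div_lt_div_iff₀ hb ha]; nlinarith [sq_pos_of_ne_zero hx]

lemma le_div_one_add_mul_of_nonpos {lam x : ℝ} (hlam : lam ≤ 0) (h : 0 < 1 + lam * x) :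
    x ≤ x / (1 + lam * x) := by
  rw [le_div_iff₀ h]; nlinarith [sq_nonneg x]

lemma strictAntiOn_score {g : ι → ℝ} (hg : ∃ i, g i ≠ 0) :
    StrictAntiOn (score g) (multiplierDomain g) := by
  intro a ha b hb hab
  obtain ⟨j, hj⟩ := hg
  exact sum_lt_sum (fun i _ => div_one_add_mul_le_of_le hab.le (ha i) (hb i))
    ⟨j, mem_univ j, div_one_add_mul_lt_of_lt hab hj (ha j) (hb j)⟩

lemma exists_score_pos {g : ι → ℝ} (hg : ∃ i, 0 < g i) :
    ∃ lam ∈ multiplierDomain g, lam ≤ 0 ∧ 0 < score g lam := by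
  obtain ⟨i, hi⟩ := hg
  have : Nonempty ι := ⟨i⟩
  obtain ⟨i₀, hi₀⟩ := Finite.exists_max g
  set M := g i₀
  have hM : 0 < M := hi.trans_le (hi₀ i)
  -- `lam` is chosen so that the term of `i₀` alone, `M / (1 + lam * M) = K`, outweighs the rest.
  set K := M + |∑ i, g i| + 1
  have hMK : M < K := by linarith [abs_nonneg (∑ i, g i)]
  set lam := 1 / K - 1 / M with hlam_def
  have hlam : lam ≤ 0 := sub_nonpos.2 (one_div_le_one_div_of_le hM hMK.le)
  have hden₀ : 1 + lam * M = M / K := by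
    rw [hlam_def]; field_simp [(hM.trans hMK).ne']; ring
  have hdom : lam ∈ multiplierDomain g := fun i => by
    have : 0 < 1 + lam * M := by rw [hden₀]; exact div_pos hM (hM.trans hMK)
    nlinarith [mul_le_mul_of_nonpos_left (hi₀ i) hlam]
  refine ⟨lam, hdom, hlam, ?_⟩
  have hsingle : g i₀ / (1 + lam * g i₀) - g i₀ ≤ ∑ i, (g i / (1 + lam * g i) - g i) :=
    single_le_sum (fun i _ => sub_nonneg.2 (le_div_one_add_mul_of_nonpos hlam (hdom i)))
      (mem_univ i₀)
  have hterm : M / (1 + lam * M) = K := by rw [hden₀]; field_simp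
  rw [sum_sub_distrib, hterm] at hsingle
  have habs := neg_abs_le (∑ i, g i)
  unfold score
  linarith

lemma exists_score_neg {g : ι → ℝ} (hg : ∃ i, g i < 0) :
    ∃ lam ∈ multiplierDomain g, 0 ≤ lam ∧ score g lam < 0 := by
  obtain ⟨i, hi⟩ := hg
  obtain ⟨lam, hdom, hlam, hpos⟩ := exists_score_pos (g := -g) ⟨i, neg_pos.2 hi⟩
  refine ⟨-lam, ?_, neg_nonneg.2 hlam, ?_⟩
  · rwa [← neg_mem_multiplierDomain_neg, neg_neg]
  · rw [← neg_neg lam, score_neg] at hpos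
    linarith

theorem existsUnique_score_eq_zero {g : ι → ℝ} (hpos : ∃ i, 0 < g i) (hneg : ∃ i, g i < 0) :
    ∃! lam, lam ∈ multiplierDomain g ∧ score g lam = 0 := by
  obtain ⟨a, ha, ha0, hfa⟩ := exists_score_pos hpos
  obtain ⟨b, hb, hb0, hfb⟩ := exists_score_neg hneg
  have hIcc : Set.Icc a b ⊆ multiplierDomain g := (ordConnected_multiplierDomain g).out ha hb
  obtain ⟨lam, hlam, hzero⟩ := intermediate_value_Icc' (ha0.trans hb0)
    ((continuousOn_score g).mono hIcc) ⟨hfb.le, hfa.le⟩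
  obtain ⟨i, hi⟩ := hpos
  exact ⟨lam, ⟨hIcc hlam, hzero⟩, fun lam' h' =>
    (strictAntiOn_score ⟨i, hi.ne'⟩).injOn h'.1 (hIcc hlam) (h'.2.trans hzero.symm)⟩

lemma sum_log_le_sum_log_of_sum_div_le_card {p q : ι → ℝ} (hp : ∀ i, 0 < p i)
    (hq : ∀ i, 0 < q i) (h : ∑ i, q i / p i ≤ Fintype.card ι) :
    ∑ i, Real.log (q i) ≤ ∑ i, Real.log (p i) := by
  have hlog : ∀ i, Real.log (q i) - Real.log (p i) ≤ q i / p i - 1 := fun i => by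
    rw [← Real.log_div (hq i).ne' (hp i).ne']
    exact Real.log_le_sub_one_of_pos (div_pos (hq i) (hp i))
  have := sum_le_sum fun i (_ : i ∈ univ) => hlog i
  simp only [sum_sub_distrib, sum_const, card_univ, nsmul_eq_mul, mul_one] at this
  linarith

theorem sum_log_le_sum_log_weights [Nonempty ι] {g : ι → ℝ} {lam : ℝ}
    (hlam : lam ∈ multiplierDomain g) {q : ι → ℝ} (hq : ∀ i, 0 < q i) (hq1 : ∑ i, q i = 1)
    (hqg : ∑ i, q i * g i = 0) :
    ∑ i, Real.log (q i) ≤ ∑ i, Real.log ((Fintype.card ι : ℝ)⁻¹ / (1 + lam * g i)) := by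
  have hn : (0 : ℝ) < Fintype.card ι := by exact_mod_cast Fintype.card_pos
  refine sum_log_le_sum_log_of_sum_div_le_card (fun i => div_pos (by positivity) (hlam i)) hq
    (le_of_eq ?_)
  calc ∑ i, q i / ((Fintype.card ι : ℝ)⁻¹ / (1 + lam * g i))
      = Fintype.card ι * (∑ i, q i + lam * ∑ i, q i * g i) := by
        rw [mul_sum, ← sum_add_distrib, mul_sum]
        refine sum_congr rfl fun i _ => ?_
        field_simp
    _ = Fintype.card ι := by rw [hq1, hqg]; ring

lemma Ioo_eq_multiplierDomain {g : ι → ℝ} (hne : (univ : Finset ι).Nonempty)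
    (hmin : univ.inf' hne g < 0) (hmax : 0 < univ.sup' hne g) :
    Set.Ioo (-1 / univ.sup' hne g) (-1 / univ.inf' hne g) = multiplierDomain g := by
  ext lam
  have hsup : -1 / univ.sup' hne g < lam ↔ 0 < 1 + lam * univ.sup' hne g := by
    rw [div_lt_iff₀ hmax]; constructor <;> intro h <;> linarith
  have hinf : lam < -1 / univ.inf' hne g ↔ 0 < 1 + lam * univ.inf' hne g := by
    rw [lt_div_iff_of_neg hmin]; constructor <;> intro h <;> linarith
  rw [Set.mem_Ioo, hsup, hinf]
  constructor
  · rintro ⟨hM, hm⟩ i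
    rw [mul_comm] at hM hm ⊢
    exact one_add_mul_pos_of_le_of_le (inf'_le g (mem_univ i)) (le_sup' g (mem_univ i)) hm hM
  · intro h
    obtain ⟨iM, -, hiM⟩ := exists_mem_eq_sup' hne g
    obtain ⟨im, -, him⟩ := exists_mem_eq_inf' hne g
    exact ⟨hiM ▸ h iM, him ▸ h im⟩

end EmpiricalLikelihood

open EmpiricalLikelihood

theorem stmt7_general (n : ℕ) (g : Fin n → ℝ)
    (hne : (Finset.univ : Finset (Fin n)).Nonempty)
    (hmin : Finset.univ.inf' hne g < 0) (hmax : 0 < Finset.univ.sup' hne g) :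
    ∃ lam : ℝ,
      (lam ∈ Set.Ioo (-1 / Finset.univ.sup' hne g) (-1 / Finset.univ.inf' hne g) ∧
        ∑ i, g i / (1 + lam * g i) = 0) ∧
      (∀ lam' : ℝ,
        lam' ∈ Set.Ioo (-1 / Finset.univ.sup' hne g) (-1 / Finset.univ.inf' hne g) ∧
          ∑ i, g i / (1 + lam' * g i) = 0 → lam' = lam) ∧
      (∀ q : Fin n → ℝ, (∀ i, 0 < q i) → ∑ i, q i = 1 → ∑ i, q i * g i = 0 →
        ∑ i, Real.log (q i) ≤ ∑ i, Real.log ((n : ℝ)⁻¹ / (1 + lam * g i))) := by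
  rw [Ioo_eq_multiplierDomain hne hmin hmax]
  obtain ⟨iM, -, hiM⟩ := exists_mem_eq_sup' hne g
  obtain ⟨im, -, him⟩ := exists_mem_eq_inf' hne g
  have : Nonempty (Fin n) := ⟨iM⟩
  obtain ⟨lam, ⟨hlam, hzero⟩, hunique⟩ :=
    existsUnique_score_eq_zero ⟨iM, hiM ▸ hmax⟩ ⟨im, him ▸ hmin⟩
  refine ⟨lam, ⟨hlam, hzero⟩, hunique, fun q hq hq1 hqg => ?_⟩
  simpa using sum_log_le_sum_log_weights hlam hq hq1 hqg

theorem stmt7 (n : ℕ) (hn : 2 ≤ n) (g : Fin n → ℝ)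
    (hne : (Finset.univ : Finset (Fin n)).Nonempty)
    (hmin : Finset.univ.inf' hne g < 0) (hmax : 0 < Finset.univ.sup' hne g) :
    ∃ lam : ℝ,
      (lam ∈ Set.Ioo (-1 / Finset.univ.sup' hne g) (-1 / Finset.univ.inf' hne g) ∧
        ∑ i, g i / (1 + lam * g i) = 0) ∧
      (∀ lam' : ℝ,
        lam' ∈ Set.Ioo (-1 / Finset.univ.sup' hne g) (-1 / Finset.univ.inf' hne g) ∧
          ∑ i, g i / (1 + lam' * g i) = 0 → lam' = lam) ∧
      (∀ q : Fin n → ℝ, (∀ i, 0 < q i) → ∑ i, q i = 1 → ∑ i, q i * g i = 0 →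
        ∑ i, Real.log (q i) ≤ ∑ i, Real.log ((n : ℝ)⁻¹ / (1 + lam * g i))) :=
  stmt7_general n g hne hmin hmax
end

section
/- Let λ ↦ φ(λ) = ∑_{i=1}^n g_i/(1 + λ g_i) on the open interval I = (−1/max_i g_i, −1/min_i g_i), where min_i g_i < 0 < max_i g_i. Then φ is strictly decreasing on I, φ(λ) → +∞ as λ → inf I⁺ and φ(λ) → −∞ as λ → sup I⁻, so φ has a unique zero in I. -/
/-!
For `g_i ≠ 0` the summand `g_i / (1 + λ g_i)` is the hyperbola `(λ + 1 / g_i)⁻¹`, strictly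
decreasing on either side of its pole `-1 / g_i`, and `I` is exactly the interval around `0` on
which all denominators are positive; hence `φ` is strictly decreasing on `I`. As `λ → inf I⁺` the
summand of a maximal `g_i` tends to `+∞`, while every other summand, being antitone, stays above
its value `g_i` at `λ = 0`; symmetrically at `sup I`. The intermediate value theorem gives a zero,
unique by strict monotonicity.
-/

open Finset Filter Set Topology

theorem StrictAntiOn.existsUnique_eq_of_tendsto_Ioo {α δ : Type*}
    [ConditionallyCompleteLinearOrder α] [TopologicalSpace α] [OrderTopology α] [DenselyOrdered α]
    [LinearOrder δ] [TopologicalSpace δ] [OrderClosedTopology δ] {f : α → δ} {a b : α}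
    (hab : a < b) (hf : StrictAntiOn f (Ioo a b)) (hcont : ContinuousOn f (Ioo a b))
    (ha : Tendsto f (𝓝[>] a) atTop) (hb : Tendsto f (𝓝[<] b) atBot) (y : δ) :
    ∃! x, x ∈ Ioo a b ∧ f x = y := by
  obtain ⟨x, hx, hxy⟩ := hcont.surjOn_of_tendsto' (Set.nonempty_Ioo.2 hab)
    (by rwa [tendsto_comp_coe_Ioo_atBot hab]) (by rwa [tendsto_comp_coe_Ioo_atTop hab]) (mem_univ y)
  exact ⟨x, ⟨hx, hxy⟩, fun z hz => hf.injOn hz.1 hx (hz.2.trans hxy.symm)⟩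

variable {𝕜 : Type*} [Field 𝕜]

section Term

variable {c x y : 𝕜}

theorem div_one_add_mul_sub_div_one_add_mul (hx : 1 + x * c ≠ 0) (hy : 1 + y * c ≠ 0) :
    c / (1 + x * c) - c / (1 + y * c) = c ^ 2 * (y - x) / ((1 + x * c) * (1 + y * c)) := by
  rw [div_sub_div _ _ hx hy]
  ring

theorem div_one_add_mul_eq_inv_sub (hc : c ≠ 0) (x : 𝕜) : c / (1 + x * c) = (x - -1 / c)⁻¹ := by
  have : x - -1 / c = (1 + x * c) / c := by field_simp; ring
  rw [this, inv_div]

variable [LinearOrder 𝕜] [IsStrictOrderedRing 𝕜]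

theorem div_one_add_mul_le_div_one_add_mul (hx : 0 < 1 + x * c) (hy : 0 < 1 + y * c)
    (hxy : x ≤ y) : c / (1 + y * c) ≤ c / (1 + x * c) := by
  rw [← sub_nonneg, div_one_add_mul_sub_div_one_add_mul hx.ne' hy.ne']
  have := sub_nonneg.2 hxy
  positivity

theorem div_one_add_mul_lt_div_one_add_mul (hc : c ≠ 0) (hx : 0 < 1 + x * c)
    (hy : 0 < 1 + y * c) (hxy : x < y) : c / (1 + y * c) < c / (1 + x * c) := by
  rw [← sub_pos, div_one_add_mul_sub_div_one_add_mul hx.ne' hy.ne']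
  have := sub_pos.2 hxy
  positivity

variable [TopologicalSpace 𝕜] [OrderTopology 𝕜]

theorem tendsto_div_one_add_mul_nhdsGT (hc : c ≠ 0) :
    Tendsto (fun x => c / (1 + x * c)) (𝓝[>] (-1 / c)) atTop := by
  simp only [div_one_add_mul_eq_inv_sub hc]
  refine tendsto_inv_nhdsGT_zero.comp <| tendsto_nhdsWithin_of_tendsto_nhds_of_eventually_within _
    ?_ (eventually_nhdsWithin_of_forall fun _ hx => mem_Ioi.2 (sub_pos.2 hx))
  exact ((continuous_sub_right _).tendsto' _ 0 (sub_self _)).mono_left nhdsWithin_le_nhds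

theorem tendsto_div_one_add_mul_nhdsLT (hc : c ≠ 0) :
    Tendsto (fun x => c / (1 + x * c)) (𝓝[<] (-1 / c)) atBot := by
  simp only [div_one_add_mul_eq_inv_sub hc]
  refine tendsto_inv_nhdsLT_zero.comp <| tendsto_nhdsWithin_of_tendsto_nhds_of_eventually_within _
    ?_ (eventually_nhdsWithin_of_forall fun _ hx => mem_Iio.2 (sub_neg.2 hx))
  exact ((continuous_sub_right _).tendsto' _ 0 (sub_self _)).mono_left nhdsWithin_le_nhds

end Term

section Sum

variable [LinearOrder 𝕜] [IsStrictOrderedRing 𝕜]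

theorem one_add_mul_pos_of_mem_Ioo {m s c x : 𝕜} (hm : m < 0) (hs : 0 < s) (hmc : m ≤ c)
    (hcs : c ≤ s) (hx : x ∈ Ioo (-1 / s) (-1 / m)) : 0 < 1 + x * c := by
  have hxs : 0 < 1 + x * s := by
    have := (div_lt_iff₀ hs).1 hx.1
    linarith
  have hxm : 0 < 1 + x * m := by
    have := (lt_div_iff_of_neg hm).1 hx.2
    linarith
  rcases le_total 0 x with h | h
  · linarith [mul_le_mul_of_nonneg_left hmc h]
  · linarith [mul_le_mul_of_nonpos_left hcs h]

variable {ι : Type*} [Fintype ι] {g : ι → 𝕜}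

theorem strictAntiOn_sum_div_one_add_mul {S : Set 𝕜} (hS : ∀ x ∈ S, ∀ i, 0 < 1 + x * g i)
    {i₀ : ι} (hi₀ : g i₀ ≠ 0) : StrictAntiOn (fun x => ∑ i, g i / (1 + x * g i)) S :=
  fun x hx y hy hxy => Finset.sum_lt_sum
    (fun i _ => div_one_add_mul_le_div_one_add_mul (hS x hx i) (hS y hy i) hxy.le)
    ⟨i₀, mem_univ _, div_one_add_mul_lt_div_one_add_mul hi₀ (hS x hx i₀) (hS y hy i₀) hxy⟩

variable [TopologicalSpace 𝕜] [OrderTopology 𝕜]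

theorem continuousOn_sum_div_one_add_mul {S : Set 𝕜} (hS : ∀ x ∈ S, ∀ i, 0 < 1 + x * g i) :
    ContinuousOn (fun x => ∑ i, g i / (1 + x * g i)) S :=
  continuousOn_finsetSum _ fun i _ =>
    continuousOn_const.div (by fun_prop) fun x hx => (hS x hx i).ne'

theorem tendsto_sum_div_one_add_mul_nhdsGT {i₀ : ι} (hi₀ : 0 < g i₀)
    (hS : ∀ x ∈ Ioc (-1 / g i₀) 0, ∀ i, 0 < 1 + x * g i) :
    Tendsto (fun x => ∑ i, g i / (1 + x * g i)) (𝓝[>] (-1 / g i₀)) atTop := by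
  classical
  have hlt : -1 / g i₀ < 0 := div_neg_of_neg_of_pos (by norm_num) hi₀
  refine tendsto_atTop_mono' _ ?_ (tendsto_atTop_add_const_right _ (∑ i ∈ univ.erase i₀, g i)
    (tendsto_div_one_add_mul_nhdsGT hi₀.ne'))
  filter_upwards [Ioc_mem_nhdsGT hlt] with x hx
  rw [← add_sum_erase _ _ (mem_univ i₀)]
  gcongr with i
  simpa using div_one_add_mul_le_div_one_add_mul (hS x hx i) (by simp) hx.2

theorem tendsto_sum_div_one_add_mul_nhdsLT {i₁ : ι} (hi₁ : g i₁ < 0)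
    (hS : ∀ x ∈ Ico 0 (-1 / g i₁), ∀ i, 0 < 1 + x * g i) :
    Tendsto (fun x => ∑ i, g i / (1 + x * g i)) (𝓝[<] (-1 / g i₁)) atBot := by
  classical
  have hlt : 0 < -1 / g i₁ := div_pos_of_neg_of_neg (by norm_num) hi₁
  refine tendsto_atBot_mono' _ ?_ (tendsto_atBot_add_const_right _ (∑ i ∈ univ.erase i₁, g i)
    (tendsto_div_one_add_mul_nhdsLT hi₁.ne))
  filter_upwards [Ico_mem_nhdsLT hlt] with x hx
  rw [← add_sum_erase _ _ (mem_univ i₁)]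
  gcongr with i
  simpa using div_one_add_mul_le_div_one_add_mul (by simp) (hS x hx i) hx.1

end Sum

theorem stmt8 (n : ℕ) (g : Fin n → ℝ)
    (hne : (Finset.univ : Finset (Fin n)).Nonempty)
    (hmin : Finset.univ.inf' hne g < 0) (hmax : 0 < Finset.univ.sup' hne g)
    (a b : ℝ) (ha : a = -1 / Finset.univ.sup' hne g) (hb : b = -1 / Finset.univ.inf' hne g)
    (φ : ℝ → ℝ) (hφ : ∀ lam, φ lam = ∑ i, g i / (1 + lam * g i)) :
    StrictAntiOn φ (Set.Ioo a b) ∧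
    Tendsto φ (nhdsWithin a (Set.Ioi a)) atTop ∧
    Tendsto φ (nhdsWithin b (Set.Iio b)) atBot ∧
    ∃! lam, lam ∈ Set.Ioo a b ∧ φ lam = 0 := by
  have hpos : ∀ x ∈ Ioo a b, ∀ i, 0 < 1 + x * g i := fun x hx i =>
    one_add_mul_pos_of_mem_Ioo hmin hmax (inf'_le g (mem_univ i)) (le_sup' g (mem_univ i))
      (ha ▸ hb ▸ hx)
  obtain ⟨i₀, -, hs⟩ := exists_mem_eq_sup' hne g
  obtain ⟨i₁, -, hm⟩ := exists_mem_eq_inf' hne g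
  rw [hs] at hmax ha
  rw [hm] at hmin hb
  subst ha hb
  have ha0 : -1 / g i₀ < 0 := div_neg_of_neg_of_pos (by norm_num) hmax
  have hb0 : 0 < -1 / g i₁ := div_pos_of_neg_of_neg (by norm_num) hmin
  have hab := ha0.trans hb0
  obtain rfl : φ = fun x => ∑ i, g i / (1 + x * g i) := funext hφ
  have hanti := strictAntiOn_sum_div_one_add_mul hpos hmax.ne'
  have htop := tendsto_sum_div_one_add_mul_nhdsGT hmax fun x hx => hpos x ⟨hx.1, hx.2.trans_lt hb0⟩
  have hbot := tendsto_sum_div_one_add_mul_nhdsLT hmin fun x hx => hpos x ⟨ha0.trans_le hx.1, hx.2⟩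
  exact ⟨hanti, htop, hbot, hanti.existsUnique_eq_of_tendsto_Ioo hab
    (continuousOn_sum_div_one_add_mul hpos) htop hbot 0⟩
end
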